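/- Let Y be a countably generated Hilbert 𝔄-module and Ω ⊆ B(Y) be norm separable and quasidiagonal. Then there exists an increasing sequence (Pₙ) of finite rank projections in B(Y), converging strongly to the identity on Y, such that ‖[Pₙ, T]‖ → 0 as n → ∞ for every T ∈ Ω. -/

import Mathlib

open Filter Topology

noncomputable section

/-- A positive element of a `*`-ring: one of the form `star b * b`. -/
def IsPosElem {R : Type} [Mul R] [Star R] (x : R) : Prop := ∃ b : R, x = star b * b

/-- Positivity for an `n × n` matrix over a `*`-ring, phrased entrywise:
`M = star b * b` for some rectangular matrix `b`. -/
def MatPos {R : Type} [AddCommMonoid R] [Mul R] [Star R] {n : ℕ}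
    (M : Fin n → Fin n → R) : Prop :=
  ∃ (m : ℕ) (b : Fin m → Fin n → R), ∀ i j, M i j = ∑ k, star (b k i) * b k j

/-- A map between `*`-rings is completely positive if all its amplifications map
positive matrices to positive matrices. -/
def IsCPMap {R Z : Type} [AddCommMonoid R] [Mul R] [Star R]
    [AddCommMonoid Z] [Mul Z] [Star Z] (φ : R → Z) : Prop :=
  ∀ (n : ℕ) (M : Fin n → Fin n → R), MatPos M → MatPos (fun i j => φ (M i j))

variable (𝔄 A : Type) [NonUnitalCStarAlgebra 𝔄] [NonUnitalCStarAlgebra A]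

/-- A compatible right Banach `𝔄`-module structure on the C*-algebra `A`,
making `A` an `𝔄`-C*-module. -/
structure CStarAction where
  act : A → 𝔄 → A
  act_add : ∀ (a : A) (α β : 𝔄), act a (α + β) = act a α + act a β
  add_act : ∀ (a b : A) (α : 𝔄), act (a + b) α = act a α + act b α
  act_smulC : ∀ (c : ℂ) (a : A) (α : 𝔄), act a (c • α) = c • act a α
  smulC_act : ∀ (c : ℂ) (a : A) (α : 𝔄), act (c • a) α = c • act a α
  norm_act : ∀ (a : A) (α : 𝔄), ‖act a α‖ ≤ ‖a‖ * ‖α‖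
  mul_act : ∀ (a b : A) (α : 𝔄), act (a * b) α = a * act b α
  act_mul : ∀ (a : A) (α β : 𝔄), act a (α * β) = act (act a α) β
  star_compat : ∀ (a : A) (α β : 𝔄),
    act (star (act (star a) (star α))) β = star (act (star (act a β)) (star α))

variable {𝔄 A}

/-- The associated left action `α • a := (a* • α*)*`. -/
def CStarAction.lact (S : CStarAction 𝔄 A) (α : 𝔄) (a : A) : A :=
  star (S.act (star a) (star α))

/-- The action is non degenerate if `a • α = 0` for all `a` forces `α = 0`. -/
def CStarAction.NonDegenerate (S : CStarAction 𝔄 A) : Prop :=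
  ∀ α : 𝔄, (∀ a : A, S.act a α = 0) → α = 0

/-- The two-sided action is a biaction: `(a • α) b = a (α • b)`. -/
def CStarAction.Biaction (S : CStarAction 𝔄 A) : Prop :=
  ∀ (a : A) (α : 𝔄) (b : A), S.act a α * b = a * S.lact α b

/-- An `𝔄`-retraction: a positive right `𝔄`-module map `τ : A → 𝔄` with strictly dense
image such that `τ` sends some bounded approximate identity of `A` strictly to a
projection `p` of `𝔄`.  (Nets are encoded by filters.) -/
structure IsRetraction (S : CStarAction 𝔄 A) (τ : A → 𝔄) : Prop where
  map_add : ∀ a b : A, τ (a + b) = τ a + τ b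
  map_smulC : ∀ (c : ℂ) (a : A), τ (c • a) = c • τ a
  pos : ∀ a : A, IsPosElem (τ (star a * a))
  map_act : ∀ (a : A) (α : 𝔄), τ (S.act a α) = τ a * α
  strict_dense : ∀ (β : 𝔄) (ε : ℝ), 0 < ε → ∀ s : Finset 𝔄,
    ∃ a : A, ∀ α ∈ s, ‖τ (S.act a α) - β * α‖ < ε
  bai : ∃ (l : Filter A) (p : 𝔄), l.NeBot ∧ (∃ C : ℝ, ∀ᶠ e in l, ‖e‖ ≤ C) ∧
    (∀ a : A, Tendsto (fun e => e * a) l (𝓝 a)) ∧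
    (∀ a : A, Tendsto (fun e => a * e) l (𝓝 a)) ∧
    star p = p ∧ p * p = p ∧
    (∀ α : 𝔄, Tendsto (fun e => τ e * α) l (𝓝 (p * α))) ∧
    (∀ α : 𝔄, Tendsto (fun e => α * τ e) l (𝓝 (α * p)))

/-- An `𝔄`-trace: a tracial `𝔄`-retraction. -/
structure IsATrace (S : CStarAction 𝔄 A) (τ : A → 𝔄) extends IsRetraction S τ : Prop where
  tracial : ∀ a b : A, τ (a * b) = τ (b * a)

/-! ### Hilbert C*-modules, adjointable operators, correspondences -/

variable (𝔄 : Type) [NonUnitalCStarAlgebra 𝔄]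

/-- A (right) Hilbert `𝔄`-module structure on a complete normed space `X`. -/
structure HilbertModuleStr (X : Type) [NormedAddCommGroup X] [NormedSpace ℂ X]
    [CompleteSpace X] where
  smul : X → 𝔄 → X
  add_smul : ∀ (x y : X) (α : 𝔄), smul (x + y) α = smul x α + smul y α
  smul_add : ∀ (x : X) (α β : 𝔄), smul x (α + β) = smul x α + smul x β
  smulC_smul : ∀ (c : ℂ) (x : X) (α : 𝔄), smul (c • x) α = c • smul x α
  smul_smulC : ∀ (c : ℂ) (x : X) (α : 𝔄), smul x (c • α) = c • smul x α
  smul_mul : ∀ (x : X) (α β : 𝔄), smul x (α * β) = smul (smul x α) β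
  inner : X → X → 𝔄
  inner_add_left : ∀ x y z : X, inner (x + y) z = inner x z + inner y z
  inner_add_right : ∀ x y z : X, inner x (y + z) = inner x y + inner x z
  inner_smulC_right : ∀ (c : ℂ) (x y : X), inner x (c • y) = c • inner x y
  inner_smulC_left : ∀ (c : ℂ) (x y : X), inner (c • x) y = (starRingEnd ℂ c) • inner x y
  inner_smul_right : ∀ (x y : X) (α : 𝔄), inner x (smul y α) = inner x y * α
  inner_star : ∀ x y : X, star (inner x y) = inner y x
  inner_pos : ∀ x : X, IsPosElem (inner x x)
  norm_inner : ∀ x : X, ‖x‖ ^ 2 = ‖inner x x‖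

variable {𝔄}
variable {X : Type} [NormedAddCommGroup X] [NormedSpace ℂ X] [CompleteSpace X]

namespace HilbertModuleStr

variable (H : HilbertModuleStr 𝔄 X)

theorem inner_smul_left (x y : X) (α : 𝔄) :
    H.inner (H.smul x α) y = star α * H.inner x y := by
  rw [← H.inner_star, H.inner_smul_right, star_mul, H.inner_star]

theorem inner_zero_left (y : X) : H.inner 0 y = 0 := by
  have h := H.inner_add_left 0 0 y
  rw [add_zero] at h
  simpa using h

theorem inner_zero_right (x : X) : H.inner x 0 = 0 := by
  rw [← H.inner_star, H.inner_zero_left, star_zero]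

theorem inner_neg_left (x y : X) : H.inner (-x) y = -H.inner x y := by
  have : (-x : X) = ((-1 : ℂ) • x) := by simp
  rw [this, H.inner_smulC_left]; simp

theorem inner_neg_right (x y : X) : H.inner x (-y) = -H.inner x y := by
  have : (-y : X) = ((-1 : ℂ) • y) := by simp
  rw [this, H.inner_smulC_right]; simp

theorem inner_sub_left (x y z : X) : H.inner (x - y) z = H.inner x z - H.inner y z := by
  rw [sub_eq_add_neg, H.inner_add_left, H.inner_neg_left, sub_eq_add_neg]

theorem inner_sub_right (x y z : X) : H.inner x (y - z) = H.inner x y - H.inner x z := by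
  rw [sub_eq_add_neg, H.inner_add_right, H.inner_neg_right, sub_eq_add_neg]

end HilbertModuleStr

/-- A bounded adjointable operator on a Hilbert `𝔄`-module. -/
structure Adj (H : HilbertModuleStr 𝔄 X) where
  toFun : X → X
  adjFun : X → X
  inner_adj : ∀ x y : X, H.inner (toFun x) y = H.inner x (adjFun y)

namespace Adj

variable {H : HilbertModuleStr 𝔄 X}

theorem ext' {S T : Adj H} (h1 : S.toFun = T.toFun) (h2 : S.adjFun = T.adjFun) : S = T := by
  cases S; cases T; simp_all

instance : Add (Adj H) :=
  ⟨fun S T =>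
    { toFun := fun x => S.toFun x + T.toFun x
      adjFun := fun x => S.adjFun x + T.adjFun x
      inner_adj := fun x y => by
        rw [H.inner_add_left, H.inner_add_right, S.inner_adj, T.inner_adj] }⟩

instance : Zero (Adj H) :=
  ⟨{ toFun := fun _ => 0
     adjFun := fun _ => 0
     inner_adj := fun x y => by rw [H.inner_zero_left, H.inner_zero_right] }⟩

instance : Neg (Adj H) :=
  ⟨fun S =>
    { toFun := fun x => -S.toFun x
      adjFun := fun x => -S.adjFun x
      inner_adj := fun x y => by
        rw [H.inner_neg_left, H.inner_neg_right, S.inner_adj] }⟩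

instance : Sub (Adj H) :=
  ⟨fun S T =>
    { toFun := fun x => S.toFun x - T.toFun x
      adjFun := fun x => S.adjFun x - T.adjFun x
      inner_adj := fun x y => by
        rw [H.inner_sub_left, H.inner_sub_right, S.inner_adj, T.inner_adj] }⟩

instance : SMul ℂ (Adj H) :=
  ⟨fun c S =>
    { toFun := fun x => c • S.toFun x
      adjFun := fun x => (starRingEnd ℂ c) • S.adjFun x
      inner_adj := fun x y => by
        rw [H.inner_smulC_left, H.inner_smulC_right, S.inner_adj] }⟩

instance : Mul (Adj H) :=
  ⟨fun S T =>
    { toFun := fun x => S.toFun (T.toFun x)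
      adjFun := fun x => T.adjFun (S.adjFun x)
      inner_adj := fun x y => by rw [S.inner_adj, T.inner_adj] }⟩

instance : One (Adj H) :=
  ⟨{ toFun := id
     adjFun := id
     inner_adj := fun _ _ => rfl }⟩

instance : Star (Adj H) :=
  ⟨fun S =>
    { toFun := S.adjFun
      adjFun := S.toFun
      inner_adj := fun x y =>
        calc H.inner (S.adjFun x) y = star (H.inner y (S.adjFun x)) := (H.inner_star _ _).symm
          _ = star (H.inner (S.toFun y) x) := by rw [S.inner_adj]
          _ = H.inner x (S.toFun y) := H.inner_star _ _ }⟩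

@[simp] theorem add_toFun (S T : Adj H) (x : X) : (S + T).toFun x = S.toFun x + T.toFun x := rfl
@[simp] theorem add_adjFun (S T : Adj H) (x : X) :
    (S + T).adjFun x = S.adjFun x + T.adjFun x := rfl
@[simp] theorem zero_toFun (x : X) : (0 : Adj H).toFun x = 0 := rfl
@[simp] theorem zero_adjFun (x : X) : (0 : Adj H).adjFun x = 0 := rfl

instance : AddCommMonoid (Adj H) where
  add_assoc S T U := ext' (funext fun x => add_assoc _ _ _) (funext fun x => add_assoc _ _ _)
  zero_add S := ext' (funext fun x => zero_add _) (funext fun x => zero_add _)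
  add_zero S := ext' (funext fun x => add_zero _) (funext fun x => add_zero _)
  add_comm S T := ext' (funext fun x => add_comm _ _) (funext fun x => add_comm _ _)
  nsmul := nsmulRec

/-- The operator norm of a (automatically bounded) adjointable operator. -/
noncomputable instance : Norm (Adj H) := ⟨fun T => ⨆ x : X, ‖T.toFun x‖ / ‖x‖⟩

end Adj

/-- The commutant of a set of adjointable operators. -/
def Commutant {H : HilbertModuleStr 𝔄 X} (Ω : Set (Adj H)) : Set (Adj H) :=
  {T | ∀ U ∈ Ω, T * U = U * T}

/-! ### Quasidiagonality in Hilbert `𝔄`-modules -/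

section QD

variable {X : Type} [NormedAddCommGroup X] [NormedSpace ℂ X] [CompleteSpace X]

/-- The closed `𝔄`-submodule of a Hilbert `𝔄`-module generated by a set. -/
def GenSubmodule (H : HilbertModuleStr 𝔄 X) (G : Set X) : Set X :=
  ⋂₀ {S : Set X | IsClosed S ∧ G ⊆ S ∧ (0 : X) ∈ S ∧
    (∀ x ∈ S, ∀ y ∈ S, x + y ∈ S) ∧
    (∀ (c : ℂ), ∀ x ∈ S, c • x ∈ S) ∧
    (∀ x ∈ S, ∀ α : 𝔄, H.smul x α ∈ S)}

/-- A finite rank operator: one whose range is a finitely generated closed submodule. -/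
def IsFiniteRank {H : HilbertModuleStr 𝔄 X} (T : Adj H) : Prop :=
  ∃ (n : ℕ) (v : Fin n → X), Set.range T.toFun = GenSubmodule H (Set.range v)

/-- A projection among adjointable operators. -/
def IsProjection {H : HilbertModuleStr 𝔄 X} (P : Adj H) : Prop :=
  P * P = P ∧ star P = P

/-- A set `Ω ⊆ B(Y)` is quasidiagonal if, for finitely many operators in `Ω`, finitely
many vectors and `ε > 0`, there is a finite rank projection `P` with `‖PT − TP‖ < ε`
on the given operators and `P = I` on the given vectors. -/
def QDSet {H : HilbertModuleStr 𝔄 X} (Ω : Set (Adj H)) : Prop :=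
  ∀ (n m : ℕ) (T : Fin n → Adj H), (∀ i, T i ∈ Ω) →
    ∀ (y : Fin m → X) (ε : ℝ), 0 < ε →
      ∃ P : Adj H, IsProjection P ∧ IsFiniteRank P ∧
        (∀ i, ‖P * T i - T i * P‖ < ε) ∧ (∀ j, P.toFun (y j) = y j)

/-- The countably generated Hilbert `𝔄`-modules. -/
def CountablyGenerated (H : HilbertModuleStr 𝔄 X) : Prop :=
  ∃ g : ℕ → X, GenSubmodule H (Set.range g) = Set.univ

end QD

/-!
Enumerate generators `g k` of `Y` and a dense sequence `D j` of `Ω`. At stage `n`,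
quasidiagonality gives a finite rank projection `Pₙ` that fixes `g 0, …, g n` and the
generators of the range of `Pₙ₋₁` (so the sequence increases) and `1 / (n + 1)`-commutes
with those of `D 0, …, D n` in `Ω`. Projections are contractions, so the vectors on which
`Pₙ → I` form a closed submodule; it contains every `g k`, hence is everything. Finally
`‖[P, T]‖ ≤ ‖[P, D]‖ + 2 ‖T - D‖` carries the commutator estimate from the dense
sequence to all of `Ω`.
-/

theorem norm_commutator_le_of_norm_le_one {R : Type*} [NonUnitalSeminormedRing R] {p : R}
    (hp : ‖p‖ ≤ 1) (t d : R) : ‖p * t - t * p‖ ≤ ‖p * d - d * p‖ + 2 * ‖t - d‖ := by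
  have hsplit : p * t - t * p = (p * d - d * p) + (p * (t - d) - (t - d) * p) := by
    noncomm_ring
  have hmul : ‖p‖ * ‖t - d‖ ≤ ‖t - d‖ := mul_le_of_le_one_left (norm_nonneg _) hp
  calc ‖p * t - t * p‖ ≤ ‖p * d - d * p‖ + (‖p * (t - d)‖ + ‖(t - d) * p‖) := by
        rw [hsplit]; exact (norm_add_le _ _).trans (by gcongr; exact norm_sub_le _ _)
    _ ≤ ‖p * d - d * p‖ + (‖p‖ * ‖t - d‖ + ‖t - d‖ * ‖p‖) := by
        gcongr <;> exact norm_mul_le _ _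
    _ ≤ ‖p * d - d * p‖ + 2 * ‖t - d‖ := by linarith

theorem exists_seq_of_exists_succ {α : Type*} {p : ℕ → α → Prop} {r : α → α → Prop}
    (h₀ : ∃ a, p 0 a) (hsucc : ∀ n a, p n a → ∃ b, p (n + 1) b ∧ r a b) :
    ∃ f : ℕ → α, (∀ n, p n (f n)) ∧ ∀ n, r (f n) (f (n + 1)) := by
  choose! next hnext using hsucc
  obtain ⟨a₀, ha₀⟩ := h₀
  let f : ℕ → α := fun n => Nat.rec a₀ next n
  have hf : ∀ n, p n (f n) := fun n => by
    induction n with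
    | zero => exact ha₀
    | succ n ih => exact (hnext n _ ih).1
  exact ⟨f, hf, fun n => (hnext n _ (hf n)).2⟩

namespace HilbertModuleStr

variable (H : HilbertModuleStr 𝔄 X)

def smulRight (α : 𝔄) : X →+ X :=
  AddMonoidHom.mk' (H.smul · α) fun x y => H.add_smul x y α

theorem inner_self_eq_zero {x : X} : H.inner x x = 0 ↔ x = 0 := by
  rw [← norm_eq_zero, ← H.norm_inner, pow_eq_zero_iff two_ne_zero, norm_eq_zero]

theorem ext_inner_left {w w' : X} (h : ∀ z, H.inner w z = H.inner w' z) : w = w' := by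
  rw [← sub_eq_zero, ← H.inner_self_eq_zero, H.inner_sub_left, h, sub_self]

open MulOpposite in
theorem norm_inner_le (x y : X) : ‖H.inner x y‖ ≤ ‖x‖ * ‖y‖ := by
  -- Mathlib's `CStarModule` is a left module: read `X` as a Hilbert `𝔄ᵐᵒᵖ`-module.
  let _ := CStarAlgebra.spectralOrder 𝔄ᵐᵒᵖ
  have := CStarAlgebra.spectralOrderedRing 𝔄ᵐᵒᵖ
  let _ : SMul 𝔄ᵐᵒᵖ X := ⟨fun a x => H.smul x a.unop⟩
  let _ : CStarModule 𝔄ᵐᵒᵖ X :=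
    { inner := fun x y => op (H.inner x y)
      inner_add_right := by intro x y z; simp [H.inner_add_right]
      inner_self_nonneg := by
        intro x
        obtain ⟨b, hb⟩ := H.inner_pos x
        have : op (H.inner x x) = star (op (star b)) * op (star b) := by simp [hb]
        simp only [this]
        exact star_mul_self_nonneg _
      inner_self := by intro x; simp [H.inner_self_eq_zero]
      inner_op_smul_right := by
        intro a x y
        exact congrArg op (H.inner_smul_right x y a.unop)
      inner_smul_right_complex := by intro z x y; simp [H.inner_smulC_right]
      star_inner x y := congrArg op (H.inner_star x y)
      norm_eq_sqrt_norm_inner_self x := by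
        rw [norm_op, ← H.norm_inner, Real.sqrt_sq (norm_nonneg x)] }
  exact CStarModule.norm_inner_le X (A := 𝔄ᵐᵒᵖ) (x := x) (y := y)

theorem norm_smul_le (x : X) (α : 𝔄) : ‖H.smul x α‖ ≤ ‖x‖ * ‖α‖ := by
  have hsq : ‖H.smul x α‖ ^ 2 ≤ (‖x‖ * ‖α‖) ^ 2 :=
    calc ‖H.smul x α‖ ^ 2 = ‖star α * H.inner x x * α‖ := by
          rw [H.norm_inner, H.inner_smul_left, H.inner_smul_right, mul_assoc]
      _ ≤ ‖star α‖ * ‖H.inner x x‖ * ‖α‖ := norm_mul₃_le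
      _ = (‖x‖ * ‖α‖) ^ 2 := by rw [norm_star, ← H.norm_inner]; ring
  exact pow_le_pow_iff_left₀ (norm_nonneg _) (by positivity) two_ne_zero |>.mp hsq

theorem continuous_smul_const (α : 𝔄) : Continuous (H.smul · α) :=
  AddMonoidHomClass.continuous_of_bound (H.smulRight α) ‖α‖ fun x => by
    rw [mul_comm]; exact H.norm_smul_le x α

theorem continuous_inner_const (z : X) : Continuous (H.inner · z) :=
  AddMonoidHomClass.continuous_of_bound
    (AddMonoidHom.mk' (H.inner · z) fun x y => H.inner_add_left x y z) ‖z‖ fun x => by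
      rw [mul_comm]; exact H.norm_inner_le x z

end HilbertModuleStr

namespace Adj

variable {H : HilbertModuleStr 𝔄 X}

@[ext] theorem ext {S T : Adj H} (h : ∀ x, S.toFun x = T.toFun x) : S = T := by
  refine ext' (funext h) (funext fun y => H.ext_inner_left fun x => ?_)
  rw [← H.inner_star, ← S.inner_adj, h, T.inner_adj, H.inner_star]

theorem map_add (T : Adj H) (x y : X) : T.toFun (x + y) = T.toFun x + T.toFun y :=
  H.ext_inner_left fun z => by
    rw [T.inner_adj, H.inner_add_left, H.inner_add_left, T.inner_adj, T.inner_adj]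

theorem map_smul (T : Adj H) (c : ℂ) (x : X) : T.toFun (c • x) = c • T.toFun x :=
  H.ext_inner_left fun z => by
    rw [T.inner_adj, H.inner_smulC_left, H.inner_smulC_left, T.inner_adj]

theorem map_smul_right (T : Adj H) (x : X) (α : 𝔄) :
    T.toFun (H.smul x α) = H.smul (T.toFun x) α :=
  H.ext_inner_left fun z => by
    rw [T.inner_adj, H.inner_smul_left, H.inner_smul_left, T.inner_adj]

def toLinearMap (T : Adj H) : X →ₗ[ℂ] X where
  toFun := T.toFun
  map_add' := T.map_add
  map_smul' := T.map_smul

theorem continuous_toFun (T : Adj H) : Continuous T.toFun :=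
  T.toLinearMap.continuous_of_seq_closed_graph fun u x y hu hTu =>
    H.ext_inner_left fun z => by
      have hlim : Tendsto (fun n => H.inner (T.toFun (u n)) z) atTop
          (𝓝 (H.inner (T.toFun x) z)) := by
        simp only [T.inner_adj]
        exact ((H.continuous_inner_const _).tendsto x).comp hu
      exact tendsto_nhds_unique (((H.continuous_inner_const z).tendsto y).comp hTu) hlim

def toCLM (T : Adj H) : X →L[ℂ] X := ⟨T.toLinearMap, T.continuous_toFun⟩

@[simp] theorem toCLM_apply (T : Adj H) (x : X) : T.toCLM x = T.toFun x := rfl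

theorem toCLM_mul (S T : Adj H) : (S * T).toCLM = S.toCLM * T.toCLM := rfl

theorem toCLM_sub (S T : Adj H) : (S - T).toCLM = S.toCLM - T.toCLM := rfl

theorem norm_eq_opNorm (T : Adj H) : ‖T‖ = ‖T.toCLM‖ := by
  have hbdd : BddAbove (Set.range fun x : X => ‖T.toFun x‖ / ‖x‖) :=
    ⟨‖T.toCLM‖, Set.forall_mem_range.mpr T.toCLM.ratio_le_opNorm⟩
  refine (ContinuousLinearMap.opNorm_eq_of_bounds (Real.iSup_nonneg fun x => by positivity)
    (fun x => ?_) fun N hN hbound => Real.iSup_le (fun x => ?_) hN).symm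
  · rcases eq_or_ne x 0 with rfl | hx
    · simp only [map_zero, norm_zero, mul_zero, le_refl]
    · exact (div_le_iff₀ (norm_pos_iff.mpr hx)).mp (le_ciSup hbdd x)
  · exact div_le_of_le_mul₀ (norm_nonneg x) hN (hbound x)

theorem norm_nonneg (T : Adj H) : 0 ≤ ‖T‖ := T.norm_eq_opNorm ▸ _root_.norm_nonneg _

end Adj

section Projections

variable {H : HilbertModuleStr 𝔄 X}

theorem genSubmodule_subset (H : HilbertModuleStr 𝔄 X) {G : Set X} {p : Submodule ℂ X}
    (hclosed : IsClosed (p : Set X)) (hG : G ⊆ p) (hsmul : ∀ x ∈ p, ∀ α, H.smul x α ∈ p) :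
    GenSubmodule H G ⊆ p :=
  Set.sInter_subset_of_mem ⟨hclosed, hG, p.zero_mem, fun _ hx _ hy => p.add_mem hx hy,
    fun c _ hx => p.smul_mem c hx, hsmul⟩

theorem Adj.fixes_genSubmodule (T : Adj H) {G : Set X} (hfix : ∀ v ∈ G, T.toFun v = v) :
    ∀ x ∈ GenSubmodule H G, T.toFun x = x :=
  genSubmodule_subset H (p := LinearMap.eqLocus T.toLinearMap LinearMap.id)
    (isClosed_eq T.continuous_toFun continuous_id) hfix
    fun x hx α => (T.map_smul_right x α).trans (congrArg (H.smul · α) hx)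

namespace IsProjection

variable {P Q : Adj H}

theorem toFun_idem (hP : IsProjection P) (x : X) : P.toFun (P.toFun x) = P.toFun x :=
  congrFun (congrArg Adj.toFun hP.1) x

theorem adjFun_eq (hP : IsProjection P) : P.adjFun = P.toFun :=
  congrArg Adj.toFun hP.2

theorem inner_apply_self (hP : IsProjection P) (x : X) :
    H.inner (P.toFun x) (P.toFun x) = H.inner x (P.toFun x) := by
  rw [P.inner_adj, hP.adjFun_eq, hP.toFun_idem]

theorem norm_apply_le (hP : IsProjection P) (x : X) : ‖P.toFun x‖ ≤ ‖x‖ := by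
  have hsq : ‖P.toFun x‖ ^ 2 ≤ ‖x‖ * ‖P.toFun x‖ := by
    rw [H.norm_inner, hP.inner_apply_self]
    exact H.norm_inner_le _ _
  nlinarith [norm_nonneg (P.toFun x), norm_nonneg x]

theorem norm_toCLM_le_one (hP : IsProjection P) : ‖P.toCLM‖ ≤ 1 :=
  P.toCLM.opNorm_le_bound zero_le_one fun x => by simpa using hP.norm_apply_le x

theorem norm_commutator_le (hP : IsProjection P) (T D : Adj H) :
    ‖P * T - T * P‖ ≤ ‖P * D - D * P‖ + 2 * ‖T - D‖ := by
  simp only [Adj.norm_eq_opNorm, Adj.toCLM_sub, Adj.toCLM_mul]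
  exact norm_commutator_le_of_norm_le_one hP.norm_toCLM_le_one _ _

theorem mul_eq_of_fixes_range (hP : IsProjection P) (hQ : IsProjection Q)
    (hfix : ∀ x, P.toFun (Q.toFun x) = Q.toFun x) : Q * P = Q ∧ P * Q = Q := by
  have hPQ : P * Q = Q := Adj.ext hfix
  refine ⟨?_, hPQ⟩
  calc Q * P = star Q * star P := by rw [hP.2, hQ.2]
    _ = star (P * Q) := rfl
    _ = Q := by rw [hPQ, hQ.2]

end IsProjection

end Projections

section StrongConvergence

variable {H : HilbertModuleStr 𝔄 X}

def Adj.tendstoSubmodule (P : ℕ → Adj H) : Submodule ℂ X where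
  carrier := {x | Tendsto (fun n => (P n).toFun x) atTop (𝓝 x)}
  add_mem' {x y} hx hy := by simpa only [Set.mem_ofPred_eq, Adj.map_add] using hx.add hy
  zero_mem' := by
    simpa only [Set.mem_ofPred_eq, ← Adj.toCLM_apply, map_zero] using tendsto_const_nhds
  smul_mem' c x hx := by simpa only [Set.mem_ofPred_eq, Adj.map_smul] using hx.const_smul c

@[simp] theorem Adj.mem_tendstoSubmodule {P : ℕ → Adj H} {x : X} :
    x ∈ Adj.tendstoSubmodule P ↔ Tendsto (fun n => (P n).toFun x) atTop (𝓝 x) :=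
  Iff.rfl

theorem isClosed_tendstoSubmodule {P : ℕ → Adj H} (hP : ∀ n, IsProjection (P n)) :
    IsClosed (Adj.tendstoSubmodule P : Set X) := by
  have hbdd : ∃ C, ∀ n, ‖(P n).toCLM‖ ≤ C := ⟨1, fun n => (hP n).norm_toCLM_le_one⟩
  have hequi : Equicontinuous fun n => ⇑(P n).toCLM :=
    ((NormedSpace.equicontinuous_TFAE fun n => (P n).toCLM).out 5 1).mp hbdd
  exact hequi.isClosed_setOfPred_tendsto continuous_id

theorem tendsto_toFun_of_eventually_fixes {P : ℕ → Adj H} (hP : ∀ n, IsProjection (P n))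
    {g : ℕ → X} (hg : GenSubmodule H (Set.range g) = Set.univ)
    (hfix : ∀ k, ∀ᶠ n in atTop, (P n).toFun (g k) = g k) (x : X) :
    Tendsto (fun n => (P n).toFun x) atTop (𝓝 x) := by
  refine genSubmodule_subset H (p := Adj.tendstoSubmodule P) (isClosed_tendstoSubmodule hP)
    ?_ (fun y hy α => ?_) (hg ▸ Set.mem_univ x)
  · rintro - ⟨k, rfl⟩
    exact tendsto_const_nhds.congr' (EventuallyEq.symm (hfix k))
  · simp only [Adj.mem_tendstoSubmodule, Adj.map_smul_right] at hy ⊢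
    exact ((H.continuous_smul_const α).tendsto y).comp hy

theorem tendsto_norm_commutator_of_approx {P : ℕ → Adj H} (hP : ∀ n, IsProjection (P n))
    {T : Adj H} (hT : ∀ ε > 0, ∃ D : Adj H, ‖T - D‖ < ε ∧
      Tendsto (fun n => ‖P n * D - D * P n‖) atTop (𝓝 0)) :
    Tendsto (fun n => ‖P n * T - T * P n‖) atTop (𝓝 0) := by
  rw [Metric.tendsto_atTop]
  intro ε hε
  obtain ⟨D, hTD, hD⟩ := hT (ε / 3) (by positivity)
  obtain ⟨N, hN⟩ := Metric.tendsto_atTop.mp hD (ε / 3) (by positivity)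
  refine ⟨N, fun n hn => ?_⟩
  have hDn := hN n hn
  rw [Real.dist_eq, sub_zero, abs_of_nonneg (Adj.norm_nonneg _)] at hDn ⊢
  linarith [(hP n).norm_commutator_le T D]

end StrongConvergence

section Construction

variable {H : HilbertModuleStr 𝔄 X} {Ω : Set (Adj H)}

theorem QDSet.exists_of_finset (hqd : QDSet Ω) (F : Finset (Adj H)) (hF : ∀ T ∈ F, T ∈ Ω)
    (Y : Finset X) {ε : ℝ} (hε : 0 < ε) :
    ∃ P : Adj H, IsProjection P ∧ IsFiniteRank P ∧
      (∀ T ∈ F, ‖P * T - T * P‖ < ε) ∧ ∀ y ∈ Y, P.toFun y = y := by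
  obtain ⟨P, hPp, hPf, hcomm, hfix⟩ := hqd F.card Y.card (fun i => F.equivFin.symm i)
    (fun i => hF _ (F.equivFin.symm i).2) (fun j => Y.equivFin.symm j) ε hε
  refine ⟨P, hPp, hPf, fun T hT => ?_, fun y hy => ?_⟩
  · simpa using hcomm (F.equivFin ⟨T, hT⟩)
  · simpa using hfix (Y.equivFin ⟨y, hy⟩)

structure IsQDStage (Ω : Set (Adj H)) (g : ℕ → X) (D : ℕ → Adj H) (n : ℕ) (P : Adj H) :
    Prop where
  isProjection : IsProjection P
  isFiniteRank : IsFiniteRank P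
  fixes : ∀ k ≤ n, P.toFun (g k) = g k
  norm_commutator_lt : ∀ j ≤ n, D j ∈ Ω → ‖P * D j - D j * P‖ < 1 / (n + 1)

theorem QDSet.exists_isQDStage (hqd : QDSet Ω) (g : ℕ → X) (D : ℕ → Adj H) (n : ℕ)
    (Y : Finset X) : ∃ P, IsQDStage Ω g D n P ∧ ∀ y ∈ Y, P.toFun y = y := by
  classical
  obtain ⟨P, hPp, hPf, hcomm, hfix⟩ := hqd.exists_of_finset
    (((Finset.range (n + 1)).filter (D · ∈ Ω)).image D) (by
      simp only [Finset.mem_image, Finset.mem_filter]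
      rintro - ⟨j, ⟨-, hj⟩, rfl⟩
      exact hj)
    ((Finset.range (n + 1)).image g ∪ Y) (by positivity : (0 : ℝ) < 1 / (n + 1))
  refine ⟨P, ⟨hPp, hPf, fun k hk => hfix _ ?_, fun j hj hjΩ => hcomm _ ?_⟩,
    fun y hy => hfix y (Finset.mem_union_right _ hy)⟩
  · exact Finset.mem_union_left _ (Finset.mem_image_of_mem g (by simpa [Nat.lt_succ_iff]))
  · exact Finset.mem_image_of_mem D (by simpa [Nat.lt_succ_iff] using ⟨hj, hjΩ⟩)

theorem QDSet.exists_isQDStage_fixing (hqd : QDSet Ω) (g : ℕ → X) (D : ℕ → Adj H) (n : ℕ)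
    {Q : Adj H} (hQ : IsFiniteRank Q) :
    ∃ P, IsQDStage Ω g D n P ∧ ∀ x, P.toFun (Q.toFun x) = Q.toFun x := by
  classical
  obtain ⟨m, v, hv⟩ := hQ
  obtain ⟨P, hP, hfix⟩ := hqd.exists_isQDStage g D n (Finset.univ.image v)
  refine ⟨P, hP, fun x => P.fixes_genSubmodule ?_ _ (hv ▸ Set.mem_range_self x)⟩
  rintro - ⟨i, rfl⟩
  exact hfix _ (Finset.mem_image_of_mem v (Finset.mem_univ i))

theorem IsQDStage.tendsto_norm_commutator {g : ℕ → X} {D : ℕ → Adj H} {P : ℕ → Adj H}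
    (hP : ∀ n, IsQDStage Ω g D n (P n)) {j : ℕ} (hj : D j ∈ Ω) :
    Tendsto (fun n => ‖P n * D j - D j * P n‖) atTop (𝓝 0) :=
  squeeze_zero' (Eventually.of_forall fun _ => Adj.norm_nonneg _)
    (eventually_atTop.mpr ⟨j, fun n hn => ((hP n).norm_commutator_lt j hn hj).le⟩)
    tendsto_one_div_add_atTop_nhds_zero_nat

end Construction

/-- Let `Y` be a countably generated Hilbert `𝔄`-module and
`Ω ⊆ B(Y)` norm separable and quasidiagonal.  Then there is an increasing sequence
`(Pₙ)` of finite rank projections converging strongly to the identity such that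
`‖[Pₙ, T]‖ → 0` for every `T ∈ Ω`. -/
theorem exists_quasidiagonalizing_projections
    {𝔄 : Type} [NonUnitalCStarAlgebra 𝔄]
    {X : Type} [NormedAddCommGroup X] [NormedSpace ℂ X] [CompleteSpace X]
    (H : HilbertModuleStr 𝔄 X) (hcg : CountablyGenerated H)
    (Ω : Set (Adj H))
    (hsep : ∃ D : ℕ → Adj H, ∀ T ∈ Ω, ∀ ε : ℝ, 0 < ε → ∃ n, D n ∈ Ω ∧ ‖T - D n‖ < ε)
    (hqd : QDSet Ω) :
    ∃ P : ℕ → Adj H,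
      (∀ n, IsProjection (P n)) ∧ (∀ n, IsFiniteRank (P n)) ∧
      (∀ n, P n * P (n + 1) = P n ∧ P (n + 1) * P n = P n) ∧
      (∀ x : X, Filter.Tendsto (fun n => (P n).toFun x) Filter.atTop (𝓝 x)) ∧
      (∀ T ∈ Ω, Filter.Tendsto (fun n => ‖P n * T - T * P n‖) Filter.atTop (𝓝 (0 : ℝ))) := by
  obtain ⟨g, hg⟩ := hcg
  obtain ⟨D, hD⟩ := hsep
  obtain ⟨P, hP, hnext⟩ := exists_seq_of_exists_succ
    (p := IsQDStage Ω g D) (r := fun Q P => ∀ x, P.toFun (Q.toFun x) = Q.toFun x)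
    ((hqd.exists_isQDStage g D 0 ∅).imp fun _ h => h.1)
    fun n Q hQ => hqd.exists_isQDStage_fixing g D (n + 1) hQ.isFiniteRank
  have hproj : ∀ n, IsProjection (P n) := fun n => (hP n).isProjection
  refine ⟨P, hproj, fun n => (hP n).isFiniteRank,
    fun n => (hproj (n + 1)).mul_eq_of_fixes_range (hproj n) (hnext n),
    tendsto_toFun_of_eventually_fixes hproj hg
      fun k => eventually_atTop.mpr ⟨k, fun n hn => (hP n).fixes k hn⟩,
    fun T hT => tendsto_norm_commutator_of_approx hproj fun ε hε => ?_⟩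
  obtain ⟨j, hjΩ, hj⟩ := hD T hT ε hε
  exact ⟨D j, hj, IsQDStage.tendsto_norm_commutator hP hjΩ⟩
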